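/- arXiv:1104.1776 — 6 statements merged into one kernel-verified Lean document; each statement's English description precedes it below -/
import Mathlib

section
/- Let u, v ∈ ℂ³ with u ≠ 0, and let A : Matrix (Fin 3) (Fin 3) ℂ. Then the matrix (vecMulVec u v) * A (i.e., u vᵀ A) is symmetric if and only if there exists b ∈ ℂ such that A.vecMul v = b • u (i.e., vᵀ A = b uᵀ). -/
open Matrix

theorem Matrix.transpose_vecMulVec_eq_self_iff {n K : Type*} [Field K] {u w : n → K}
    (hu : u ≠ 0) : (vecMulVec u w)ᵀ = vecMulVec u w ↔ ∃ b : K, w = b • u := by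
  constructor
  · intro h
    obtain ⟨i, hi⟩ : ∃ i, u i ≠ 0 := Function.ne_iff.mp hu
    refine ⟨w i / u i, funext fun j => ?_⟩
    have hji : u i * w j = u j * w i := by
      simpa [vecMulVec_apply] using congrFun (congrFun h j) i
    rw [Pi.smul_apply, smul_eq_mul]
    field_simp
    linear_combination hji
  · rintro ⟨b, rfl⟩
    ext i j
    simp only [transpose_apply, vecMulVec_apply, Pi.smul_apply, smul_eq_mul]
    ring

/-- `u vᵀ A` is symmetric iff `vᵀ A = b uᵀ` for some `b ∈ ℂ`. -/
theorem vecMulVec_mul_symm_iff (u v : Fin 3 → ℂ) (hu : u ≠ 0)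
    (A : Matrix (Fin 3) (Fin 3) ℂ) :
    (Matrix.vecMulVec u v * A)ᵀ = Matrix.vecMulVec u v * A ↔
      ∃ b : ℂ, A.vecMul v = b • u := by
  rw [vecMulVec_mul]
  exact transpose_vecMulVec_eq_self_iff hu
end

section
/- Let X : Fin 3 → Fin 3 → Fin 4 → ℂ be a tensor whose frontal slices have the block pattern X i 2 k = 0 for i ∈ {0,1} and X 2 j k = 0 for j ∈ {0,1}, for all k (i.e., x_{1,3,k} = x_{2,3,k} = x_{3,1,k} = x_{3,2,k} = 0 for all k in 1-based notation). If f(X) = 0, where f(X) is the determinant of the 4×4 matrix whose k-th row is (X 0 0 k, X 0 1 k, X 1 0 k, X 1 1 k), then X has border rank at most 4. -/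
/-- A tensor `X : Fin m → Fin n → Fin l → ℂ` has rank at most `r`. -/
def rankAtMost {m n l : ℕ} (r : ℕ) (X : Fin m → Fin n → Fin l → ℂ) : Prop :=
  ∃ (a : Fin r → Fin m → ℂ) (b : Fin r → Fin n → ℂ) (c : Fin r → Fin l → ℂ),
    ∀ i j k, X i j k = ∑ p, a p i * b p j * c p k

/-- A tensor has border rank at most `r` if it is in the closure of the set of
tensors of rank at most `r`. -/
def borderRankAtMost {m n l : ℕ} (r : ℕ) (X : Fin m → Fin n → Fin l → ℂ) : Prop :=
  X ∈ closure {Y : Fin m → Fin n → Fin l → ℂ | rankAtMost r Y}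

/-!
Let `g ≠ 0` span the kernel of the matrix whose determinant is `f(X)`. Then every upper-left
`2 × 2` block of a frontal slice of `X` lies in the hyperplane `{B | ⟨g, B⟩ = 0}` of `2 × 2`
matrices. When `g`, read as a `2 × 2` matrix, is invertible, this hyperplane is spanned by three
rank-one matrices, so the upper-left block has rank at most 3 and `X` rank at most 4 (the corner
`X 2 2` adds one term). In general `g + ε • 1` is invertible for all small `ε ≠ 0`; projecting the
blocks of `X` onto the hyperplane of `g + ε • 1` along `star g` gives tensors of rank at most 4
that converge to `X` as `ε → 0`.
-/

open Filter Topology Matrix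

theorem Polynomial.eventually_eval_ne_zero_nhdsNE {R : Type*} [CommRing R] [IsDomain R]
    [TopologicalSpace R] [T1Space R] {p : Polynomial R} (hp : p ≠ 0) (a : R) :
    ∀ᶠ z in 𝓝[≠] a, p.eval z ≠ 0 :=
  nhdsNE_le_cofinite a (Polynomial.finite_setOfPred_isRoot hp).eventually_cofinite_notMem

theorem Matrix.eventually_det_add_smul_one_ne_zero {n R : Type*} [Fintype n] [DecidableEq n]
    [CommRing R] [IsDomain R] [TopologicalSpace R] [T1Space R] (A : Matrix n n R) :
    ∀ᶠ ε in 𝓝[≠] (0 : R), (A + ε • 1).det ≠ 0 := by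
  filter_upwards [Polynomial.eventually_eval_ne_zero_nhdsNE (charpoly_monic (-A)).ne_zero 0]
    with ε hε
  rwa [eval_charpoly, sub_neg_eq_add, add_comm, scalar_apply, ← smul_one_eq_diagonal] at hε

namespace BlockTensor

variable {l : ℕ} (X : Fin 3 → Fin 3 → Fin l → ℂ)

def IsBlockDiag : Prop :=
  ∀ k, X 0 2 k = 0 ∧ X 1 2 k = 0 ∧ X 2 0 k = 0 ∧ X 2 1 k = 0

def topLeft (k : Fin l) : Fin 4 → ℂ :=
  ![X 0 0 k, X 0 1 k, X 1 0 k, X 1 1 k]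

def embedTopLeft (h : Fin 4 → ℂ) : Fin 3 → Fin 3 → ℂ :=
  ![![h 0, h 1, 0], ![h 2, h 3, 0], ![0, 0, 0]]

noncomputable def projectTopLeft (g h : Fin 4 → ℂ) : Fin 3 → Fin 3 → Fin l → ℂ :=
  fun i j k => X i j k - (topLeft X k ⬝ᵥ g / (h ⬝ᵥ g)) * embedTopLeft h i j

variable {X}

theorem rankAtMost_four_of_topLeft_dotProduct_eq_zero {g : Fin 4 → ℂ} (hX : IsBlockDiag X)
    (hg : ∀ k, topLeft X k ⬝ᵥ g = 0) (hdet : !![g 0, g 1; g 2, g 3].det ≠ 0) :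
    rankAtMost 4 X := by
  set D := !![g 0, g 1; g 2, g 3].det with hD
  rw [det_fin_two_of] at hD
  -- `eᵢ ⊗ vᵢ` with `v₀ = (g 1, -g 0)`, `v₁ = (g 3, -g 2)` and `(e₀ + e₁) ⊗ (v₀ + v₁)` are
  -- annihilated by `g`, and they span its annihilator because `D ≠ 0`.
  refine ⟨![![1, 0, 0], ![0, 1, 0], ![1, 1, 0], ![0, 0, 1]],
    ![![g 1, -g 0, 0], ![g 3, -g 2, 0], ![g 1 + g 3, -(g 0 + g 2), 0], ![0, 0, 1]],
    ![fun k => -(g 0 * X 0 0 k + g 1 * X 0 1 k + g 2 * X 0 0 k + g 3 * X 0 1 k) / D,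
      fun k => (g 0 * X 1 0 k + g 1 * X 1 1 k - g 0 * X 0 0 k - g 1 * X 0 1 k) / D,
      fun k => (g 0 * X 0 0 k + g 1 * X 0 1 k) / D,
      fun k => X 2 2 k], fun i j k => ?_⟩
  have hrel : X 0 0 k * g 0 + X 0 1 k * g 1 + X 1 0 k * g 2 + X 1 1 k * g 3 = 0 := by
    simpa [topLeft, dotProduct, Fin.sum_univ_four, add_assoc] using hg k
  obtain ⟨h02, h12, h20, h21⟩ := hX k
  fin_cases i <;> fin_cases j <;> simp [Fin.sum_univ_four, h02, h12, h20, h21] <;>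
    field_simp <;> rw [hD]
  · ring
  · ring
  · linear_combination (-g 1) * hrel
  · linear_combination g 0 * hrel

theorem IsBlockDiag.projectTopLeft (hX : IsBlockDiag X) (g h : Fin 4 → ℂ) :
    IsBlockDiag (projectTopLeft X g h) := fun k => by
  obtain ⟨h02, h12, h20, h21⟩ := hX k
  simp [BlockTensor.projectTopLeft, embedTopLeft, h02, h12, h20, h21]

theorem topLeft_projectTopLeft_dotProduct {g h : Fin 4 → ℂ} (hh : h ⬝ᵥ g ≠ 0) (k : Fin l) :
    topLeft (projectTopLeft X g h) k ⬝ᵥ g = 0 := by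
  have : topLeft (projectTopLeft X g h) k = topLeft X k - (topLeft X k ⬝ᵥ g / (h ⬝ᵥ g)) • h := by
    ext i; fin_cases i <;> simp [topLeft, BlockTensor.projectTopLeft, embedTopLeft]
  rw [this, sub_dotProduct, smul_dotProduct, smul_eq_mul, div_mul_cancel₀ _ hh, sub_self]

theorem projectTopLeft_eq_self {g : Fin 4 → ℂ} (hg : ∀ k, topLeft X k ⬝ᵥ g = 0) (h : Fin 4 → ℂ) :
    projectTopLeft X g h = X := by
  ext i j k
  simp [BlockTensor.projectTopLeft, hg]

theorem continuousAt_projectTopLeft {g h : Fin 4 → ℂ} (hh : h ⬝ᵥ g ≠ 0) :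
    ContinuousAt (fun g => projectTopLeft X g h) g := by
  unfold BlockTensor.projectTopLeft
  fun_prop (disch := assumption)

end BlockTensor

open BlockTensor

/-- If the frontal slices of `X` have the block pattern and the 4×4 determinant `f(X)`
vanishes, then `X` has border rank at most 4. -/
theorem borderRank_le_four_of_det_eq_zero (X : Fin 3 → Fin 3 → Fin 4 → ℂ)
    (h02 : ∀ k, X 0 2 k = 0) (h12 : ∀ k, X 1 2 k = 0)
    (h20 : ∀ k, X 2 0 k = 0) (h21 : ∀ k, X 2 1 k = 0)
    (hf : (Matrix.of fun k : Fin 4 => ![X 0 0 k, X 0 1 k, X 1 0 k, X 1 1 k]).det = 0) :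
    borderRankAtMost 4 X := by
  obtain ⟨g, hg0, hg⟩ := exists_mulVec_eq_zero_iff.mpr hf
  have hX : IsBlockDiag X := fun k => ⟨h02 k, h12 k, h20 k, h21 k⟩
  have hgg : star g ⬝ᵥ g ≠ 0 := by
    open ComplexOrder in rwa [Ne, dotProduct_star_self_eq_zero]
  let G : ℂ → Fin 4 → ℂ := fun ε => g + ε • ![1, 0, 0, 1]
  have hG : Tendsto G (𝓝[≠] 0) (𝓝 g) := by
    have hcont : Continuous G := by fun_prop
    exact (hcont.tendsto' 0 g (by simp only [G, zero_smul, add_zero])).mono_left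
      nhdsWithin_le_nhds
  have hlim : Tendsto (fun ε => projectTopLeft X (G ε) (star g)) (𝓝[≠] 0) (𝓝 X) := by
    have := (continuousAt_projectTopLeft (X := X) hgg).tendsto.comp hG
    rwa [projectTopLeft_eq_self (congrFun hg)] at this
  have hpair : ∀ᶠ ε in 𝓝[≠] 0, star g ⬝ᵥ G ε ≠ 0 :=
    hG.eventually ((continuous_const.dotProduct continuous_id).continuousAt.eventually_ne hgg)
  refine mem_closure_of_tendsto hlim ?_
  filter_upwards [eventually_det_add_smul_one_ne_zero !![g 0, g 1; g 2, g 3], hpair]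
    with ε hdet hε
  refine rankAtMost_four_of_topLeft_dotProduct_eq_zero (hX.projectTopLeft _ _)
    (topLeft_projectTopLeft_dotProduct hε) ?_
  convert hdet using 2
  ext i j; fin_cases i <;> fin_cases j <;> simp [G, vecHead, vecTail]
end

section
/- Every tensor X : Fin 2 → Fin 3 → Fin 4 → ℂ has border rank at most 4. -/
/-!
View a `2 × n × (n+1)` tensor as a pencil `A, B` of `n × (n+1)` matrices. The signed maximal
minors of `p • A + B` form a vector `v_p` in its kernel, so `B v_p = -p A v_p`. If the vectors
`v_0, …, v_n` form an invertible matrix `G`, then `A = (A G) G⁻¹` and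
`B = (A G) diag(-p) G⁻¹`, which exhibits the tensor as a sum of `n + 1` rank-one tensors.
The determinant of `G` is a polynomial in the entries of the tensor; it does not vanish at the
tensor with slices `[I | 0]` and `[0 | I]`, where `G` is a Vandermonde matrix. Restricted to the
line from any tensor `X` to that one it is therefore a nonzero polynomial, so its roots are
isolated and `X` is a limit of tensors of rank at most `n + 1`.
-/

open Matrix Polynomial Topology

namespace Matrix

variable {R S : Type*} [CommRing R] [CommRing S] {n : ℕ}

def signedMinors (P : Matrix (Fin n) (Fin (n + 1)) R) (c : Fin (n + 1)) : R :=
  (-1) ^ (c : ℕ) * (P.submatrix id c.succAbove).det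

theorem mulVec_signedMinors (P : Matrix (Fin n) (Fin (n + 1)) R) : P *ᵥ signedMinors P = 0 := by
  funext j
  -- `(P *ᵥ signedMinors P) j` is the Laplace expansion of `P` with its row `j` repeated on top
  have hzero : (of (Fin.cons (P j) P) : Matrix (Fin (n + 1)) (Fin (n + 1)) R).det = 0 :=
    det_zero_of_row_eq (i := 0) (j := j.succ) (Fin.succ_ne_zero j).symm rfl
  rw [det_succ_row_zero] at hzero
  change ∑ c : Fin (n + 1), (-1) ^ (c : ℕ) * P j c * (P.submatrix id c.succAbove).det = 0
    at hzero
  rw [Pi.zero_apply, ← hzero, mulVec, dotProduct]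
  exact Finset.sum_congr rfl fun c _ => by rw [signedMinors]; ring

theorem signedMinors_map (f : R →+* S) (P : Matrix (Fin n) (Fin (n + 1)) R) :
    signedMinors (P.map f) = f ∘ signedMinors P := by
  funext c
  simp only [signedMinors, Function.comp_apply, map_mul, map_pow, map_neg, map_one,
    RingHom.map_det]
  rfl

def pencilKernelMatrix (A B : Matrix (Fin n) (Fin (n + 1)) R) :
    Matrix (Fin (n + 1)) (Fin (n + 1)) R :=
  of fun c p => signedMinors (((p : ℕ) : R) • A + B) c

theorem pencilKernelMatrix_map (f : R →+* S) (A B : Matrix (Fin n) (Fin (n + 1)) R) :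
    pencilKernelMatrix (A.map f) (B.map f) = (pencilKernelMatrix A B).map f := by
  ext c p
  have hpencil : ((p : ℕ) : S) • A.map f + B.map f = (((p : ℕ) : R) • A + B).map f := by
    ext; simp
  simp only [pencilKernelMatrix, of_apply, map_apply, hpencil, signedMinors_map,
    Function.comp_apply]

theorem mul_pencilKernelMatrix_eq_neg_mul_diagonal (A B : Matrix (Fin n) (Fin (n + 1)) R) :
    B * pencilKernelMatrix A B =
      -(A * pencilKernelMatrix A B * diagonal fun p : Fin (n + 1) => ((p : ℕ) : R)) := by
  ext j p
  have hker := congrFun (mulVec_signedMinors (((p : ℕ) : R) • A + B)) j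
  simp only [add_mulVec, smul_mulVec, Pi.add_apply, Pi.smul_apply, smul_eq_mul,
    Pi.zero_apply] at hker
  simp only [mulVec, dotProduct] at hker
  rw [neg_apply, mul_diagonal]
  simp only [mul_apply, pencilKernelMatrix, of_apply]
  linear_combination hker

end Matrix

theorem rankAtMost_of_slice_eq_mul_diagonal_mul {m n l r : ℕ} (X : Fin m → Fin n → Fin l → ℂ)
    (M : Matrix (Fin n) (Fin r) ℂ) (d : Fin m → Fin r → ℂ) (N : Matrix (Fin r) (Fin l) ℂ)
    (h : ∀ i, of (X i) = M * diagonal (d i) * N) : rankAtMost r X := by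
  refine ⟨fun p i => d i p, fun p j => M j p, fun p k => N p k, fun i j k => ?_⟩
  rw [← of_apply (X i), h, mul_apply]
  exact Finset.sum_congr rfl fun p _ => by rw [mul_diagonal]; ring

section PencilDet

variable {R S : Type*} [CommRing R] [CommRing S] {n : ℕ}

def pencilDet (X : Fin 2 → Fin n → Fin (n + 1) → R) : R :=
  (pencilKernelMatrix (of (X 0)) (of (X 1))).det

theorem pencilDet_map (f : R →+* S) (X : Fin 2 → Fin n → Fin (n + 1) → R) :
    pencilDet (fun i j k => f (X i j k)) = f (pencilDet X) := by
  rw [pencilDet, pencilDet, RingHom.map_det, RingHom.mapMatrix_apply, ← pencilKernelMatrix_map]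
  rfl

theorem eval_pencilDet_line (X V : Fin 2 → Fin n → Fin (n + 1) → R) (t : R) :
    (pencilDet fun i j k => C (X i j k) + Polynomial.X * C (V i j k)).eval t =
      pencilDet (X + t • V) := by
  rw [← coe_evalRingHom, ← pencilDet_map]
  congr
  funext i j k
  simp only [coe_evalRingHom, eval_add, eval_C, eval_mul, eval_X, Pi.add_apply, Pi.smul_apply,
    smul_eq_mul]

end PencilDet

theorem rankAtMost_of_pencilDet_ne_zero {n : ℕ} (X : Fin 2 → Fin n → Fin (n + 1) → ℂ)
    (h : pencilDet X ≠ 0) : rankAtMost (n + 1) X := by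
  set G := pencilKernelMatrix (of (X 0)) (of (X 1))
  have hG : IsUnit G.det := isUnit_iff_ne_zero.mpr h
  refine rankAtMost_of_slice_eq_mul_diagonal_mul X (of (X 0) * G)
    (fun i p => (-((p : ℕ) : ℂ)) ^ (i : ℕ)) G⁻¹ (Fin.forall_fin_two.mpr ⟨?_, ?_⟩)
  · simp [diagonal_one, mul_nonsing_inv_cancel_right _ _ hG]
  · calc of (X 1) = of (X 1) * G * G⁻¹ := (mul_nonsing_inv_cancel_right _ _ hG).symm
      _ = of (X 0) * G * -diagonal (fun p : Fin (n + 1) => ((p : ℕ) : ℂ)) * G⁻¹ := by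
        rw [mul_pencilKernelMatrix_eq_neg_mul_diagonal, Matrix.mul_neg]
      _ = _ := by simp [diagonal_neg]

theorem mem_closure_of_eval_ne_zero {𝕜 E : Type*} [NontriviallyNormedField 𝕜]
    [TopologicalSpace E] [AddCommGroup E] [Module 𝕜 E] [ContinuousSMul 𝕜 E] [ContinuousAdd E]
    {S : Set E} (x v : E) {q : 𝕜[X]} (hq : q ≠ 0) (hS : ∀ t, q.eval t ≠ 0 → x + t • v ∈ S) :
    x ∈ closure S := by
  have hline : Filter.Tendsto (fun t : 𝕜 => x + t • v) (𝓝[≠] 0) (𝓝 x) := by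
    have : Continuous fun t : 𝕜 => x + t • v := by fun_prop
    simpa using (this.tendsto 0).mono_left nhdsWithin_le_nhds
  have hroots : ∀ᶠ t in 𝓝[≠] (0 : 𝕜), q.eval t ≠ 0 := by
    have hfin : ({t | q.IsRoot t} \ {0}).Finite := (finite_setOfPred_isRoot hq).sdiff
    filter_upwards [nhdsWithin_le_nhds (hfin.isClosed.isOpen_compl.mem_nhds (by simp)),
      self_mem_nhdsWithin] with t hcompl hne
    exact fun hroot => hcompl ⟨hroot, hne⟩
  exact mem_closure_of_tendsto hline (hroots.mono hS)

theorem borderRankAtMost_of_pencilDet_ne_zero {n : ℕ} {W : Fin 2 → Fin n → Fin (n + 1) → ℂ}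
    (hW : pencilDet W ≠ 0) (X : Fin 2 → Fin n → Fin (n + 1) → ℂ) :
    borderRankAtMost (n + 1) X := by
  set q := pencilDet fun i j k => C (X i j k) + Polynomial.X * C ((W - X) i j k)
  have hq : q.eval 1 = pencilDet W := by rw [eval_pencilDet_line, one_smul, add_sub_cancel]
  refine mem_closure_of_eval_ne_zero X (W - X) (q := q) (fun h => hW ?_) fun t ht => ?_
  · rw [← hq, h, eval_zero]
  · rw [eval_pencilDet_line] at ht
    exact rankAtMost_of_pencilDet_ne_zero _ ht

def shiftTensor (n : ℕ) : Fin 2 → Fin n → Fin (n + 1) → ℂ :=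
  fun i j k => if (k : ℕ) = j + i then 1 else 0

theorem pencilKernelMatrix_shiftTensor_three :
    pencilKernelMatrix (of (shiftTensor 3 0)) (of (shiftTensor 3 1)) =
      (vandermonde fun p : Fin 4 => -((p : ℕ) : ℂ))ᵀ := by
  ext c p
  fin_cases c <;> fin_cases p <;>
    simp [pencilKernelMatrix, signedMinors, shiftTensor, det_fin_three, vandermonde_apply,
      Fin.succAbove] <;> norm_num

theorem pencilDet_shiftTensor_three_ne_zero : pencilDet (shiftTensor 3) ≠ 0 := by
  rw [pencilDet, pencilKernelMatrix_shiftTensor_three, det_transpose, det_vandermonde_ne_zero_iff]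
  intro p q h
  simpa [Fin.val_inj] using h

/-- Every `2 × 3 × 4` complex tensor has border rank at most 4. -/
theorem borderRank_234_le_four (X : Fin 2 → Fin 3 → Fin 4 → ℂ) :
    borderRankAtMost 4 X :=
  borderRankAtMost_of_pencilDet_ne_zero pencilDet_shiftTensor_three_ne_zero X
end

section
/- Every tensor Z : Fin 2 → Fin 2 → Fin 3 → ℂ has border rank at most 3. -/
/-!
Read `Z` as three `2 × 2` slices `Z k`, paired with a matrix `W` by `⟨W, M⟩ = ∑ i j, W i j * M i j`.
Three slices in the four-dimensional space of `2 × 2` matrices are annihilated by some `v ≠ 0`.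
If `W` is invertible, the hyperplane `W⊥` is spanned by three rank-one matrices `a ⊗ b` with
`aᵀ W b = 0`, so a tensor whose slices lie in `W⊥` has rank at most 3. The matrix `v + t • 1` is
invertible for all small `t ≠ 0`, and projecting the slices of `Z` onto `(v + t • 1)⊥` gives tensors
of rank at most 3 that tend to `Z` as `t → 0`.
-/

open Filter Topology

def contractSlices {m n l : ℕ} (W : Matrix (Fin m) (Fin n) ℂ) (Z : Fin m → Fin n → Fin l → ℂ) :
    Fin l → ℂ :=
  fun k => ∑ i, ∑ j, W i j * Z i j k

theorem exists_ne_zero_contractSlices_eq_zero {m n l : ℕ} (h : l < m * n)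
    (Z : Fin m → Fin n → Fin l → ℂ) :
    ∃ v : Matrix (Fin m) (Fin n) ℂ, v ≠ 0 ∧ contractSlices v Z = 0 := by
  have hdep : ¬LinearIndependent ℂ (fun p : Fin m × Fin n => fun k => Z p.1 p.2 k) := fun hli => by
    have hcard := hli.fintype_card_le_finrank
    simp only [Fintype.card_prod, Fintype.card_fin, Module.finrank_fin_fun] at hcard
    omega
  obtain ⟨f, hf, p, hp⟩ := Fintype.not_linearIndependent_iff.1 hdep
  refine ⟨Matrix.of fun i j => f (i, j), fun h0 => hp (congrFun₂ h0 p.1 p.2), funext fun k => ?_⟩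
  simpa [contractSlices, Fintype.sum_prod_type] using congrFun hf k

theorem contractSlices_sub_mul {m n l : ℕ} (W D : Matrix (Fin m) (Fin n) ℂ)
    (Z : Fin m → Fin n → Fin l → ℂ) (c : Fin l → ℂ) :
    contractSlices W (fun i j k => Z i j k - D i j * c k) =
      contractSlices W Z - (∑ i, ∑ j, W i j * D i j) • c := by
  ext k
  simp [contractSlices, mul_sub, Finset.sum_sub_distrib, Finset.sum_mul, mul_assoc]

theorem eventually_isUnit_add_smul_one {ι 𝕜 : Type*} [Fintype ι] [DecidableEq ι] [Field 𝕜]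
    [TopologicalSpace 𝕜] [T1Space 𝕜] (v : Matrix ι ι 𝕜) :
    ∀ᶠ t in 𝓝[≠] (0 : 𝕜), IsUnit (v + t • 1) := by
  have hS := ((-v).finite_spectrum.sdiff (t := {0})).isClosed.compl_mem_nhds (x := (0 : 𝕜))
    (by simp)
  filter_upwards [nhdsWithin_le_nhds hS, self_mem_nhdsWithin] with t ht ht0
  have : t ∉ spectrum 𝕜 (-v) := fun h => ht ⟨h, ht0⟩
  simpa [spectrum.mem_iff, Algebra.algebraMap_eq_smul_one, add_comm] using this

theorem mem_closure_setOf_isUnit_contractSlices_eq_zero {n l : ℕ}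
    {Z : Fin n → Fin n → Fin l → ℂ} {v : Matrix (Fin n) (Fin n) ℂ} (hv₀ : v ≠ 0)
    (hv : contractSlices v Z = 0) :
    Z ∈ closure {Y | ∃ W : Matrix (Fin n) (Fin n) ℂ, IsUnit W ∧ contractSlices W Y = 0} := by
  obtain ⟨i₀, j₀, hvij⟩ : ∃ i j, v i j ≠ 0 := by
    by_contra! h
    exact hv₀ (Matrix.ext h)
  set W : ℂ → Matrix (Fin n) (Fin n) ℂ := fun t => v + t • 1
  -- Project the slices of `Z` onto `(W t)⊥` along the matrix unit at `(i₀, j₀)`.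
  set Y : ℂ → Fin n → Fin n → Fin l → ℂ := fun t i j k =>
    Z i j k - Matrix.single i₀ j₀ 1 i j * (contractSlices (W t) Z k / W t i₀ j₀)
  have hY : ContinuousAt Y 0 := by
    simp only [Y, W, contractSlices]
    fun_prop (disch := simpa using hvij)
  have hY0 : Y 0 = Z := by simp [Y, W, hv]
  have hne : ∀ᶠ t in 𝓝 0, W t i₀ j₀ ≠ 0 :=
    (show Continuous fun t => W t i₀ j₀ by fun_prop).continuousAt.eventually_ne (by simpa [W])
  have hYt : ∀ᶠ t in 𝓝[≠] 0,
      ∃ W : Matrix (Fin n) (Fin n) ℂ, IsUnit W ∧ contractSlices W (Y t) = 0 := by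
    filter_upwards [eventually_isUnit_add_smul_one v, nhdsWithin_le_nhds hne] with t hunit hne
    refine ⟨W t, hunit, ?_⟩
    rw [contractSlices_sub_mul]
    ext k
    simp [Matrix.single_apply, ite_and, mul_div_cancel₀ _ hne]
  exact mem_closure_of_tendsto (hY0 ▸ hY.tendsto.mono_left nhdsWithin_le_nhds) hYt

theorem rankAtMost_three_of_contractSlices_eq_zero {l : ℕ} {Z : Fin 2 → Fin 2 → Fin l → ℂ}
    {W : Matrix (Fin 2) (Fin 2) ℂ} (hW : IsUnit W) (hZ : contractSlices W Z = 0) :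
    rankAtMost 3 Z := by
  have hd : W 0 0 * W 1 1 - W 0 1 * W 1 0 ≠ 0 := by
    simpa [Matrix.isUnit_iff_isUnit_det, Matrix.det_fin_two] using hW
  set d := W 0 0 * W 1 1 - W 0 1 * W 1 0
  -- `a p = e₀, e₁, e₀ + e₁` and `b p ⊥ Wᵀ (a p)`; the coefficients `c` come from Cramer's rule
  -- in the basis `b 0, b 1`, the shared coefficient `β` being forced by `⟨W, Z k⟩ = 0`.
  set β : Fin l → ℂ := fun k => (W 0 0 * Z 0 0 k + W 0 1 * Z 0 1 k) / d
  refine ⟨![![1, 0], ![0, 1], ![1, 1]],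
    ![![W 0 1, -W 0 0], ![W 1 1, -W 1 0], ![W 0 1 + W 1 1, -(W 0 0 + W 1 0)]],
    ![fun k => -(W 1 0 * Z 0 0 k + W 1 1 * Z 0 1 k) / d - β k,
      fun k => (W 0 0 * Z 1 0 k + W 0 1 * Z 1 1 k) / d - β k, β], ?_⟩
  intro i j k
  have hk : ∑ i, ∑ j, W i j * Z i j k = 0 := congrFun hZ k
  simp only [Fin.sum_univ_two] at hk
  fin_cases i <;> fin_cases j <;> simp [Fin.sum_univ_three, β] <;> field_simp <;> simp only [d]
  · ring
  · ring
  · linear_combination (-W 0 1) * hk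
  · linear_combination W 0 0 * hk

/-- Every `2 × 2 × 3` complex tensor has border rank at most 3. -/
theorem borderRank_223_le_three (Z : Fin 2 → Fin 2 → Fin 3 → ℂ) :
    borderRankAtMost 3 Z := by
  obtain ⟨v, hv₀, hv⟩ := exists_ne_zero_contractSlices_eq_zero (by norm_num) Z
  refine closure_mono ?_ (mem_closure_setOf_isUnit_contractSlices_eq_zero hv₀ hv)
  rintro Y ⟨W, hW, hY⟩
  exact rankAtMost_three_of_contractSlices_eq_zero hW hY
end

section
/- Let Z : Fin 2 → Fin 2 → Fin 3 → ℂ be a tensor whose three frontal slices Z_k : Matrix (Fin 2) (Fin 2) ℂ, (Z_k) i j = Z i j k, are linearly independent over ℂ. Then Z has rank exactly 3: Z has rank at most 3, and Z does not have rank at most 2. -/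
open Matrix Module Submodule Set

namespace Matrix

def outerProducts (K m n : Type*) [Mul K] : Set (Matrix m n K) :=
  {M | ∃ x y, M = vecMulVec x y}

variable {K m n : Type*}

theorem span_outerProducts [Semiring K] [Fintype m] [Fintype n] [DecidableEq m] [DecidableEq n] :
    span K (outerProducts K m n) = ⊤ := by
  refine eq_top_iff.2 fun M _ => ?_
  rw [matrix_eq_sum_single M]
  refine sum_mem fun i _ => sum_mem fun j _ => ?_
  rw [← mul_one (M i j), ← smul_eq_mul, ← smul_single, single_eq_single_vecMulVec_single]
  exact smul_mem _ _ (subset_span ⟨_, _, rfl⟩)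

section Hyperplane

variable [Field K] (f : Matrix m n K →ₗ[K] K)

theorem vecMulVec_mem_span_of_apply_eq_zero {x : m → K} {y : n → K}
    (h : f (vecMulVec x y) = 0) :
    vecMulVec x y ∈ span K (↑(LinearMap.ker f) ∩ outerProducts K m n) :=
  subset_span ⟨h, x, y, rfl⟩

variable {f} {u : m → K} {v : n → K}

theorem vecMulVec_sub_smul_mem_span_of_ne_zero (huv : f (vecMulVec u v) = 1)
    (x : m → K) (y : n → K) (hxv : f (vecMulVec x v) ≠ 0) :
    vecMulVec x y - f (vecMulVec x y) • vecMulVec u v ∈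
      span K (↑(LinearMap.ker f) ∩ outerProducts K m n) := by
  set c := f (vecMulVec x y)
  set t := c / f (vecMulVec x v)
  have hsplit : vecMulVec x y - c • vecMulVec u v =
      vecMulVec x (y - t • v) + vecMulVec (t • x - c • u) v := by
    ext i j
    simp only [sub_apply, add_apply, smul_apply, vecMulVec_apply, Pi.sub_apply, Pi.smul_apply,
      smul_eq_mul]
    ring
  rw [hsplit]
  refine add_mem (vecMulVec_mem_span_of_apply_eq_zero f ?_)
    (vecMulVec_mem_span_of_apply_eq_zero f ?_) <;>
  simp only [vecMulVec_sub, sub_vecMulVec, vecMulVec_smul, smul_vecMulVec, map_sub, map_smul,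
    smul_eq_mul, huv, t, c] <;>
  field_simp <;>
  ring

theorem vecMulVec_sub_smul_mem_span (huv : f (vecMulVec u v) = 1) (x : m → K) (y : n → K) :
    vecMulVec x y - f (vecMulVec x y) • vecMulVec u v ∈
      span K (↑(LinearMap.ker f) ∩ outerProducts K m n) := by
  by_cases hxv : f (vecMulVec x v) = 0
  · have hxu := vecMulVec_sub_smul_mem_span_of_ne_zero huv (x + u) y
      (by simp [add_vecMulVec, hxv, huv])
    have hu := vecMulVec_sub_smul_mem_span_of_ne_zero huv u y (by simp [huv])
    convert sub_mem hxu hu using 1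
    simp only [add_vecMulVec, map_add, add_smul]
    abel
  · exact vecMulVec_sub_smul_mem_span_of_ne_zero huv x y hxv

theorem span_ker_inter_outerProducts [Fintype m] [Fintype n] [DecidableEq m] [DecidableEq n] :
    span K (↑(LinearMap.ker f) ∩ outerProducts K m n) = LinearMap.ker f := by
  refine le_antisymm (span_le.2 inter_subset_left) fun M hM => ?_
  by_cases hf : ∃ x y, f (vecMulVec x y) ≠ 0
  · obtain ⟨x, v, hxv⟩ := hf
    have huv : f (vecMulVec ((f (vecMulVec x v))⁻¹ • x) v) = 1 := by
      simp [smul_vecMulVec, hxv]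
    let proj := LinearMap.id - f.smulRight (vecMulVec ((f (vecMulVec x v))⁻¹ • x) v)
    have hproj : span K (outerProducts K m n) ≤
        (span K (↑(LinearMap.ker f) ∩ outerProducts K m n)).comap proj := by
      rw [span_le]
      rintro _ ⟨x', y', rfl⟩
      exact vecMulVec_sub_smul_mem_span huv x' y'
    have hM_top : M ∈ span K (outerProducts K m n) := by
      rw [span_outerProducts]
      exact mem_top
    simpa [proj, LinearMap.mem_ker.1 hM] using hproj hM_top
  · push Not at hf
    have hall : ↑(LinearMap.ker f) ∩ outerProducts K m n = outerProducts K m n :=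
      inter_eq_right.2 fun _ ⟨x, y, hxy⟩ => hxy ▸ hf x y
    rw [hall, span_outerProducts]
    exact mem_top

end Hyperplane

end Matrix

section TensorRank

variable {m n l : ℕ}

def frontalSlice (X : Fin m → Fin n → Fin l → ℂ) (k : Fin l) : Matrix (Fin m) (Fin n) ℂ :=
  Matrix.of fun i j => X i j k

theorem rankAtMost_iff_exists_frontalSlice_mem_span {r : ℕ}
    {X : Fin m → Fin n → Fin l → ℂ} :
    rankAtMost r X ↔ ∃ (a : Fin r → Fin m → ℂ) (b : Fin r → Fin n → ℂ),
      ∀ k, frontalSlice X k ∈ span ℂ (range fun p => vecMulVec (a p) (b p)) := by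
  simp only [mem_span_range_iff_exists_fun, frontalSlice, ← Matrix.ext_iff, Matrix.sum_apply,
    Matrix.smul_apply, vecMulVec_apply, of_apply, smul_eq_mul]
  constructor
  · rintro ⟨a, b, c, hX⟩
    exact ⟨a, b, fun k => ⟨fun p => c p k, fun i j => by
      simp only [hX]
      exact Finset.sum_congr rfl fun _ _ => by ring⟩⟩
  · rintro ⟨a, b, hX⟩
    choose c hc using hX
    exact ⟨a, b, fun p k => c k p, fun i j k => by
      rw [← hc k i j]
      exact Finset.sum_congr rfl fun _ _ => by ring⟩

theorem le_of_rankAtMost_of_linearIndependent {r : ℕ} {X : Fin m → Fin n → Fin l → ℂ}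
    (hX : LinearIndependent ℂ (frontalSlice X)) (hr : rankAtMost r X) : l ≤ r := by
  obtain ⟨a, b, hab⟩ := rankAtMost_iff_exists_frontalSlice_mem_span.1 hr
  calc l = finrank ℂ (span ℂ (range (frontalSlice X))) := by simp [finrank_span_eq_card hX]
    _ ≤ finrank ℂ (span ℂ (range fun p => vecMulVec (a p) (b p))) :=
      finrank_mono (span_le.2 (range_subset_iff.2 hab))
    _ ≤ r := by
      simpa [Set.finrank] using finrank_range_le_card (R := ℂ) fun p => vecMulVec (a p) (b p)

theorem rankAtMost_finrank_span {X : Fin m → Fin n → Fin l → ℂ}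
    {T : Set (Matrix (Fin m) (Fin n) ℂ)} (hT : T ⊆ outerProducts ℂ (Fin m) (Fin n))
    (hX : ∀ k, frontalSlice X k ∈ span ℂ T) : rankAtMost (finrank ℂ (span ℂ T)) X := by
  obtain ⟨g, hgT, hg, -⟩ := exists_fun_fin_finrank_span_eq ℂ T
  choose a b hab using fun p => hT (hgT p)
  refine rankAtMost_iff_exists_frontalSlice_mem_span.2 ⟨a, b, fun k => ?_⟩
  rw [← funext hab, hg]
  exact hX k

end TensorRank

/-- A `2 × 2 × 3` tensor with linearly independent frontal slices has rank exactly 3. -/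
theorem rank_223_eq_three_of_linearIndependent (Z : Fin 2 → Fin 2 → Fin 3 → ℂ)
    (h : LinearIndependent ℂ fun k : Fin 3 => (Matrix.of fun i j => Z i j k :
      Matrix (Fin 2) (Fin 2) ℂ)) :
    rankAtMost 3 Z ∧ ¬ rankAtMost 2 Z := by
  change LinearIndependent ℂ (frontalSlice Z) at h
  refine ⟨?_, fun h2 => absurd (le_of_rankAtMost_of_linearIndependent h h2) (by norm_num)⟩
  set S := span ℂ (range (frontalSlice Z))
  have hS : finrank ℂ S = 3 := by simp [S, finrank_span_eq_card h]
  have hS_lt : S < ⊤ := by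
    refine lt_top_iff_ne_top.2 fun htop => ?_
    rw [htop, finrank_top, finrank_matrix] at hS
    simp at hS
  obtain ⟨f, hf, hSf⟩ := S.exists_le_ker_of_lt_top hS_lt
  have hker : finrank ℂ (LinearMap.ker f) = 3 := by
    have hlt : finrank ℂ (LinearMap.ker f) < 4 := by
      simpa [finrank_matrix] using finrank_lt (mt LinearMap.ker_eq_top.1 hf)
    have hle : 3 ≤ finrank ℂ (LinearMap.ker f) := hS ▸ Submodule.finrank_mono hSf
    omega
  have hZ := rankAtMost_finrank_span (X := Z) inter_subset_right fun k => by
    rw [span_ker_inter_outerProducts]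
    exact hSf (subset_span ⟨k, rfl⟩)
  rwa [span_ker_inter_outerProducts, hker] at hZ
end

section
/- Let X : Fin 4 → Fin 4 → Fin 4 → ℂ have border rank at most 4, and let X_k : Matrix (Fin 4) (Fin 4) ℂ, (X_k) i j = X i j k, be its frontal slices. Then for all coefficient vectors u, v, w : Fin 4 → ℂ, setting U₁ = ∑ k, u k • X_k, U₂ = ∑ k, v k • X_k, U₃ = ∑ k, w k • X_k, the Strassen commutative condition holds: U₁ * (adjugate U₂) * U₃ = U₃ * (adjugate U₂) * U₁. -/
open Matrix

/-!
A tensor of rank at most `n` in `ℂⁿ ⊗ ℂⁿ ⊗ ℂˡ` has all its slice combinations of the form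
`A D B` with `D` diagonal and `A`, `B` fixed. Since `adjugate (A D₂ B) = adj B · adj D₂ · adj A`
and `B adj B = det B`, `adj A · A = det A`, the product `U₁ adj U₂ U₃` collapses to
`det A det B · A D₁ adj(D₂) D₃ B`, which is symmetric in `D₁, D₃` because diagonal matrices
commute. The condition is a closed (polynomial) condition on the tensor, so it passes to the
closure, i.e. to tensors of border rank at most `n`.
-/

section StrassenCondition

variable {R : Type*} [CommRing R] {n : Type*} [Fintype n] [DecidableEq n]

def StrassenCommutes (U₁ U₂ U₃ : Matrix n n R) : Prop :=
  U₁ * adjugate U₂ * U₃ = U₃ * adjugate U₂ * U₁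

theorem mul_diagonal_mul_adjugate_mul_diagonal_mul (A B : Matrix n n R) (d₁ d₂ d₃ : n → R) :
    (A * diagonal d₁ * B) * adjugate (A * diagonal d₂ * B) * (A * diagonal d₃ * B)
      = (B.det * A.det) • (A * (diagonal d₁ * adjugate (diagonal d₂) * diagonal d₃) * B) := by
  rw [adjugate_mul_distrib, adjugate_mul_distrib]
  calc (A * diagonal d₁ * B) * (adjugate B * (adjugate (diagonal d₂) * adjugate A))
        * (A * diagonal d₃ * B)
      = A * diagonal d₁ * (B * adjugate B) * adjugate (diagonal d₂)
          * (adjugate A * A) * diagonal d₃ * B := by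
        simp only [Matrix.mul_assoc]
    _ = (B.det * A.det) • (A * (diagonal d₁ * adjugate (diagonal d₂) * diagonal d₃) * B) := by
        rw [mul_adjugate, adjugate_mul]
        simp only [Matrix.mul_smul, Matrix.smul_mul, Matrix.mul_one, smul_smul,
          Matrix.mul_assoc, mul_comm A.det]

theorem diagonal_mul_adjugate_diagonal_mul_diagonal_comm (d₁ d₂ d₃ : n → R) :
    diagonal d₁ * adjugate (diagonal d₂) * diagonal d₃
      = diagonal d₃ * adjugate (diagonal d₂) * diagonal d₁ := by
  simp only [adjugate_diagonal, diagonal_mul_diagonal]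
  congr 1
  funext i
  ring

theorem strassenCommutes_mul_diagonal_mul (A B : Matrix n n R) (d₁ d₂ d₃ : n → R) :
    StrassenCommutes (A * diagonal d₁ * B) (A * diagonal d₂ * B) (A * diagonal d₃ * B) := by
  rw [StrassenCommutes, mul_diagonal_mul_adjugate_mul_diagonal_mul,
    mul_diagonal_mul_adjugate_mul_diagonal_mul, diagonal_mul_adjugate_diagonal_mul_diagonal_comm]

end StrassenCondition

section Slices

variable {m n l : ℕ}

def sliceCombination (Y : Fin m → Fin n → Fin l → ℂ) (u : Fin l → ℂ) :
    Matrix (Fin m) (Fin n) ℂ :=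
  ∑ k, u k • Matrix.of fun i j => Y i j k

theorem continuous_sliceCombination (u : Fin l → ℂ) :
    Continuous fun Y : Fin m → Fin n → Fin l → ℂ => sliceCombination Y u := by
  unfold sliceCombination
  fun_prop

theorem sliceCombination_eq_of_decomposition {r : ℕ} {Y : Fin m → Fin n → Fin l → ℂ}
    {a : Fin r → Fin m → ℂ} {b : Fin r → Fin n → ℂ} {c : Fin r → Fin l → ℂ}
    (h : ∀ i j k, Y i j k = ∑ p, a p i * b p j * c p k) (u : Fin l → ℂ) :
    sliceCombination Y u = (Matrix.of a)ᵀ * diagonal (fun p => ∑ k, u k * c p k) * Matrix.of b := by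
  ext i j
  rw [Matrix.mul_apply]
  simp only [sliceCombination, Matrix.sum_apply, Matrix.smul_apply, Matrix.of_apply, smul_eq_mul,
    h, mul_diagonal, Matrix.transpose_apply, Finset.mul_sum, Finset.sum_mul]
  rw [Finset.sum_comm]
  exact Finset.sum_congr rfl fun p _ => Finset.sum_congr rfl fun k _ => by ring

theorem strassenCommutes_of_rankAtMost {Y : Fin n → Fin n → Fin l → ℂ} (hY : rankAtMost n Y)
    (u v w : Fin l → ℂ) :
    StrassenCommutes (sliceCombination Y u) (sliceCombination Y v) (sliceCombination Y w) := by
  obtain ⟨a, b, c, hdecomp⟩ := hY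
  simp only [sliceCombination_eq_of_decomposition hdecomp]
  exact strassenCommutes_mul_diagonal_mul _ _ _ _ _

theorem isClosed_setOf_strassenCommutes (u v w : Fin l → ℂ) :
    IsClosed {Y : Fin n → Fin n → Fin l → ℂ |
      StrassenCommutes (sliceCombination Y u) (sliceCombination Y v) (sliceCombination Y w)} := by
  have hu := continuous_sliceCombination (m := n) (n := n) u
  have hv := continuous_sliceCombination (m := n) (n := n) v
  have hw := continuous_sliceCombination (m := n) (n := n) w
  exact isClosed_eq ((hu.matrix_mul hv.matrix_adjugate).matrix_mul hw)
    ((hw.matrix_mul hv.matrix_adjugate).matrix_mul hu)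

theorem strassenCommutes_of_borderRankAtMost {Y : Fin n → Fin n → Fin l → ℂ}
    (hY : borderRankAtMost n Y) (u v w : Fin l → ℂ) :
    StrassenCommutes (sliceCombination Y u) (sliceCombination Y v) (sliceCombination Y w) :=
  closure_minimal (fun _ hZ => strassenCommutes_of_rankAtMost hZ u v w)
    (isClosed_setOf_strassenCommutes u v w) hY

end Slices

/-- Tensors of border rank at most 4 satisfy the Strassen commutative conditions. -/
theorem strassen_commutative_conditions (X : Fin 4 → Fin 4 → Fin 4 → ℂ)
    (hX : borderRankAtMost 4 X) (u v w : Fin 4 → ℂ) :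
    let Xs : Fin 4 → Matrix (Fin 4) (Fin 4) ℂ := fun k => Matrix.of fun i j => X i j k
    let U₁ := ∑ k, u k • Xs k
    let U₂ := ∑ k, v k • Xs k
    let U₃ := ∑ k, w k • Xs k
    U₁ * (adjugate U₂) * U₃ = U₃ * (adjugate U₂) * U₁ :=
  strassenCommutes_of_borderRankAtMost hX u v w
end
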